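/- Let D = (V,A) be a directed graph, s,t ∈ V, M ⊆ A, ℓ ≥ 1, let X₀ ⊆ A be the union of the arc sets of ℓ pairwise arc-disjoint directed s-t paths, and let Y ⊆ A∖X₀. Define the residual graph D_{X₀}(X₀ ∪ Y) on vertex set V whose arcs are the arcs of Y in their original direction together with the reversal of every arc of X₀. Then X₀ ∪ Y is a feasible FTF solution if and only if every vulnerable arc f ∈ M ∩ X₀ has both of its endpoints in the same strongly connected component of D_{X₀}(X₀ ∪ Y). -/

import Mathlib

/-!
Identify an arc set `S` with the 0/1 flow it carries: `S` is an `s`-`t` flow of value `k` when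
`∑_{(u,v) ∈ S} (g u - g v) = k (g s - g t)` for every potential `g : V → ℤ`. The union `X₀` of `ℓ`
arc-disjoint `s`-`t` paths is such a flow of value `ℓ`, and conversely every flow of value `ℓ`
splits into `ℓ` arc-disjoint `s`-`t` paths: no arc leaves the set of vertices reachable from `s`,
so `t` is reachable; remove a simple `s`-`t` path and recurse.

If `f.1` reaches `f.2` in the residual graph, take a simple residual path from `f.1` to `f.2`.
Removing from `X₀` the arc `f` and the arcs of `X₀` that the path traverses backwards, and adding
the arcs of `Y` it traverses, changes no potential drop, so it leaves a flow of value `ℓ` inside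
`(X₀ ∪ Y) ∖ {f}`. If it does not, let `R` be the set of vertices residually reachable from `f.1`:
no arc of `X₀` enters `R` and no arc of `Y` leaves it. Testing against the indicator of `R`, the
arcs of `X₀` leaving `R`, `f` among them, are exactly as many as the arcs leaving `R` minus those
entering it of any flow of value `ℓ`; but in `(X₀ ∪ Y) ∖ {f}` only the others can leave `R`.
The reverse reachability is the reversed arc `f` itself.
-/

/-- `P` is the arc set of a directed `s`-`t` path: there is a list of distinct vertices
starting at `s` and ending at `t` whose set of consecutive pairs is exactly `P`. -/
def IsPathArcs {V : Type*} [DecidableEq V] (s t : V) (P : Finset (V × V)) : Prop :=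
  ∃ L : List V, L.head? = some s ∧ L.getLast? = some t ∧ L.Nodup ∧
    P = (L.zip L.tail).toFinset

/-- `S` contains `ℓ` pairwise arc-disjoint directed `s`-`t` paths. -/
def HasDisjointPaths {V : Type*} [DecidableEq V] (S : Finset (V × V)) (s t : V)
    (ℓ : ℕ) : Prop :=
  ∃ P : Fin ℓ → Finset (V × V), (∀ i, P i ⊆ S) ∧
    (∀ i j, i ≠ j → Disjoint (P i) (P j)) ∧ ∀ i, IsPathArcs s t (P i)

/-- Feasibility for Fault-Tolerant Flow: for every vulnerable arc `f ∈ M`, the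
digraph `(V, S \ {f})` contains `ℓ` pairwise arc-disjoint directed `s`-`t` paths. -/
def ftfFeasible {V : Type*} [DecidableEq V] (S M : Finset (V × V)) (s t : V)
    (ℓ : ℕ) : Prop :=
  ∀ f ∈ M, HasDisjointPaths (S.erase f) s t ℓ

section Flows

open Finset

variable {V : Type*}

/-- Tested against the indicator of a vertex this is flow conservation at that vertex; against
the indicator of a vertex set it counts the arcs of `S` leaving the set minus those entering it. -/
def IsFlow (S : Finset (V × V)) (s t : V) (k : ℕ) : Prop :=
  ∀ g : V → ℤ, ∑ p ∈ S, (g p.1 - g p.2) = k * (g s - g t)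

/-- The arc relation of the residual graph `D_X(X ∪ Y)`. -/
def residualAdj (X Y : Finset (V × V)) (x y : V) : Prop :=
  (x, y) ∈ Y ∨ (y, x) ∈ X

theorem sum_boole_sub_boole (S : Finset (V × V)) (R : V → Prop) [DecidablePred R] :
    ∑ p ∈ S, ((if R p.1 then 1 else 0 : ℤ) - if R p.2 then 1 else 0) =
      #{p ∈ S | R p.1 ∧ ¬R p.2} - #{p ∈ S | ¬R p.1 ∧ R p.2} := by
  rw [natCast_card_filter, natCast_card_filter, ← sum_sub_distrib]
  refine sum_congr rfl fun p _ => ?_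
  by_cases h₁ : R p.1 <;> by_cases h₂ : R p.2 <;> simp [h₁, h₂]

theorem IsFlow.reflTransGen {S : Finset (V × V)} {s t : V} {k : ℕ} (hS : IsFlow S s t k)
    (hk : 0 < k) : Relation.ReflTransGen (fun x y => (x, y) ∈ S) s t := by
  classical
  by_contra hst
  set R := Relation.ReflTransGen (fun x y => (x, y) ∈ S) s
  have hleave : {p ∈ S | R p.1 ∧ ¬R p.2} = ∅ :=
    filter_eq_empty_iff.2 fun p hp h => h.2 (h.1.tail hp)
  have hcut := hS fun v => if R v then 1 else 0
  rw [sum_boole_sub_boole, hleave, if_pos .refl, if_neg hst] at hcut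
  simp only [card_empty, Nat.cast_zero, zero_sub, sub_zero, mul_one] at hcut
  omega

theorem List.IsChain.rel_of_mem_zip_tail {r : V → V → Prop} {L : List V} (h : L.IsChain r)
    {p : V × V} (hp : p ∈ L.zip L.tail) : r p.1 p.2 := by
  induction L with
  | nil => simp at hp
  | cons a L ih =>
    cases L with
    | nil => simp at hp
    | cons b L =>
      rw [List.isChain_cons_cons] at h
      rw [List.tail_cons, List.zip_cons_cons, List.mem_cons] at hp
      rcases hp with rfl | hp
      · exact h.1
      · exact ih h.2 hp

theorem exists_nodup_isChain_of_reflTransGen {r : V → V → Prop} {s t : V}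
    (h : Relation.ReflTransGen r s t) :
    ∃ L : List V, L.head? = some s ∧ L.getLast? = some t ∧ L.Nodup ∧ L.IsChain r := by
  induction h using Relation.ReflTransGen.head_induction_on with
  | refl => exact ⟨[t], rfl, rfl, List.nodup_singleton t, List.isChain_singleton t⟩
  | @head a c hac _ ih =>
    obtain ⟨L, hh, hl, hnd, hch⟩ := ih
    by_cases haL : a ∈ L
    · -- cut off the cycle through `a`
      obtain ⟨l₁, l₂, rfl⟩ := List.append_of_mem haL
      refine ⟨a :: l₂, rfl, ?_, hnd.sublist (List.sublist_append_right l₁ _), hch.right_of_append⟩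
      rwa [List.getLast?_append_of_ne_nil _ (List.cons_ne_nil a l₂)] at hl
    · obtain _ | ⟨b, L⟩ := L
      · simp at hh
      obtain rfl : b = c := by simpa using hh
      exact ⟨a :: b :: L, rfl, by rwa [List.getLast?_cons_cons], List.nodup_cons.2 ⟨haL, hnd⟩,
        List.isChain_cons_cons.2 ⟨hac, hch⟩⟩

variable [DecidableEq V]

theorem exists_isPathArcs_of_reflTransGen {r : V → V → Prop} {s t : V}
    (h : Relation.ReflTransGen r s t) : ∃ P, IsPathArcs s t P ∧ ∀ p ∈ P, r p.1 p.2 := by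
  obtain ⟨L, hh, hl, hnd, hch⟩ := exists_nodup_isChain_of_reflTransGen h
  exact ⟨_, ⟨L, hh, hl, hnd, rfl⟩, fun p hp => hch.rel_of_mem_zip_tail (List.mem_toFinset.1 hp)⟩

theorem sum_zip_tail_sub (g : V → ℤ) (a : V) (L : List V) (h : (a :: L).Nodup) :
    ∑ p ∈ ((a :: L).zip L).toFinset, (g p.1 - g p.2) =
      g a - g ((a :: L).getLast (List.cons_ne_nil a L)) := by
  induction L generalizing a with
  | nil => simp
  | cons b L ih =>
    have hfresh : (a, b) ∉ ((b :: L).zip L).toFinset := fun hab =>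
      (List.nodup_cons.1 h).1 (List.of_mem_zip (List.mem_toFinset.1 hab)).1
    rw [List.zip_cons_cons, List.toFinset_cons, sum_insert hfresh, ih b h.of_cons,
      List.getLast_cons_cons]
    ring

namespace IsPathArcs

variable {s t : V} {P : Finset (V × V)}

theorem isFlow (h : IsPathArcs s t P) : IsFlow P s t 1 := by
  obtain ⟨_ | ⟨a, L⟩, hs, ht, hnd, rfl⟩ := h
  · simp at hs
  obtain rfl : a = s := by simpa using hs
  rw [List.getLast?_eq_some_getLast (List.cons_ne_nil _ _), Option.some_inj] at ht
  intro g
  rw [List.tail_cons, sum_zip_tail_sub g a L hnd, ht, Nat.cast_one, one_mul]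

theorem snd_ne_start (h : IsPathArcs s t P) {p : V × V} (hp : p ∈ P) : p.2 ≠ s := by
  obtain ⟨_ | ⟨a, L⟩, hs, -, hnd, rfl⟩ := h
  · simp at hs
  obtain rfl : a = s := by simpa using hs
  rintro rfl
  exact (List.nodup_cons.1 hnd).1 (List.of_mem_zip (List.mem_toFinset.1 hp)).2

end IsPathArcs

theorem isFlow_biUnion {ℓ : ℕ} {s t : V} {P : Fin ℓ → Finset (V × V)}
    (hdisj : ∀ i j, i ≠ j → Disjoint (P i) (P j)) (hpath : ∀ i, IsPathArcs s t (P i)) :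
    IsFlow (univ.biUnion P) s t ℓ := by
  intro g
  rw [sum_biUnion fun i _ j _ hij => hdisj i j hij]
  simp [fun i => (hpath i).isFlow g, mul_sub]

namespace HasDisjointPaths

variable {S T Q : Finset (V × V)} {s t : V} {k : ℕ}

theorem exists_isFlow (h : HasDisjointPaths S s t k) : ∃ Q ⊆ S, IsFlow Q s t k := by
  obtain ⟨P, hPS, hdisj, hpath⟩ := h
  exact ⟨univ.biUnion P, biUnion_subset.2 fun i _ => hPS i, isFlow_biUnion hdisj hpath⟩

theorem mono (hST : S ⊆ T) (h : HasDisjointPaths S s t k) : HasDisjointPaths T s t k := by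
  obtain ⟨P, hPS, hdisj, hpath⟩ := h
  exact ⟨P, fun i => (hPS i).trans hST, hdisj, hpath⟩

theorem cons (hQ : IsPathArcs s t Q) (hQS : Q ⊆ S) (h : HasDisjointPaths (S \ Q) s t k) :
    HasDisjointPaths S s t (k + 1) := by
  obtain ⟨P, hPS, hdisj, hpath⟩ := h
  have hQP : ∀ j, Disjoint Q (P j) := fun j => disjoint_of_subset_right (hPS j) disjoint_sdiff
  refine ⟨Fin.cons Q P, Fin.cases hQS fun j => (hPS j).trans sdiff_subset, ?_,
    Fin.cases hQ hpath⟩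
  intro i j hij
  cases i using Fin.cases <;> cases j using Fin.cases
  · exact absurd rfl hij
  · exact hQP _
  · exact (hQP _).symm
  · exact hdisj _ _ fun h => hij (congrArg Fin.succ h)

end HasDisjointPaths

namespace IsFlow

variable {S X Y : Finset (V × V)} {s t : V} {k : ℕ}

theorem sdiff {Q : Finset (V × V)} (hS : IsFlow S s t (k + 1)) (hQS : Q ⊆ S)
    (hQ : IsFlow Q s t 1) : IsFlow (S \ Q) s t k := by
  intro g
  rw [sum_sdiff_eq_sub hQS, hS g, hQ g]
  push_cast
  ring

theorem hasDisjointPaths (hS : IsFlow S s t k) : HasDisjointPaths S s t k := by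
  induction k generalizing S with
  | zero => exact ⟨fun i => i.elim0, fun i => i.elim0, fun i => i.elim0, fun i => i.elim0⟩
  | succ k ih =>
    obtain ⟨Q, hQ, hQS⟩ := exists_isPathArcs_of_reflTransGen (hS.reflTransGen k.succ_pos)
    exact .cons hQ hQS (ih (hS.sdiff hQS hQ.isFlow))

theorem reflTransGen_residualAdj_of_hasDisjointPaths {f : V × V} (hX : IsFlow X s t k)
    (hf : f ∈ X) (hpaths : HasDisjointPaths ((X ∪ Y).erase f) s t k) :
    Relation.ReflTransGen (residualAdj X Y) f.1 f.2 := by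
  classical
  obtain ⟨Q, hQ, hQflow⟩ := hpaths.exists_isFlow
  by_contra hf₂
  set R := Relation.ReflTransGen (residualAdj X Y) f.1
  have hXenter : {p ∈ X | ¬R p.1 ∧ R p.2} = ∅ :=
    filter_eq_empty_iff.2 fun p hp h => h.1 (h.2.tail (Or.inr hp))
  have hQleave : {p ∈ Q | R p.1 ∧ ¬R p.2} ⊆ {p ∈ X | R p.1 ∧ ¬R p.2}.erase f := by
    intro p hp
    obtain ⟨hpQ, hp₁, hp₂⟩ := mem_filter.1 hp
    obtain ⟨hpf, hpXY⟩ := mem_erase.1 (hQ hpQ)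
    rcases mem_union.1 hpXY with hpX | hpY
    · exact mem_erase.2 ⟨hpf, mem_filter.2 ⟨hpX, hp₁, hp₂⟩⟩
    · exact absurd (hp₁.tail (Or.inl hpY)) hp₂
  have hfleave : f ∈ {p ∈ X | R p.1 ∧ ¬R p.2} := mem_filter.2 ⟨hf, .refl, hf₂⟩
  have hcount := (card_le_card hQleave).trans_lt (card_erase_lt_of_mem hfleave)
  have hXcut := hX fun v => if R v then 1 else 0
  have hQcut := hQflow fun v => if R v then 1 else 0
  rw [sum_boole_sub_boole, hXenter, card_empty, Nat.cast_zero, sub_zero] at hXcut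
  rw [sum_boole_sub_boole] at hQcut
  omega

theorem hasDisjointPaths_erase_of_isPathArcs {f : V × V} {P : Finset (V × V)}
    (hX : IsFlow X s t k) (hXY : Disjoint X Y) (hf : f ∈ X) (hP : IsPathArcs f.1 f.2 P)
    (hPres : ∀ p ∈ P, residualAdj X Y p.1 p.2) :
    HasDisjointPaths ((X ∪ Y).erase f) s t k := by
  set F := {p ∈ P | p ∈ Y}
  set B := {p ∈ P | p ∉ Y}.image Prod.swap
  have hfB : f ∉ B := by
    simp only [B, mem_image, not_exists, not_and]
    intro p hp hpf
    exact hP.snd_ne_start (mem_filter.1 hp).1 (by rw [← hpf, Prod.fst_swap])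
  have hBX : insert f B ⊆ X := by
    refine insert_subset hf fun q hq => ?_
    obtain ⟨p, hp, rfl⟩ := mem_image.1 hq
    obtain ⟨hpP, hpY⟩ := mem_filter.1 hp
    exact (hPres p hpP).resolve_left hpY
  have hFY : F ⊆ Y := fun p hp => (mem_filter.1 hp).2
  refine IsFlow.hasDisjointPaths (S := (X \ insert f B) ∪ F) ?_ |>.mono ?_
  · intro g
    have hPflow := hP.isFlow g
    rw [← sum_filter_add_sum_filter_not P (· ∈ Y), Nat.cast_one, one_mul] at hPflow
    have hBflow : ∑ q ∈ B, (g q.1 - g q.2) = -∑ p ∈ P with p ∉ Y, (g p.1 - g p.2) := by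
      rw [sum_image Prod.swap_injective.injOn, ← sum_neg_distrib]
      simp
    rw [sum_union (disjoint_of_subset_right hFY (hXY.mono_left sdiff_subset)),
      sum_sdiff_eq_sub hBX, sum_insert hfB, hBflow, ← hX g]
    linarith
  · intro p hp
    rcases mem_union.1 hp with hpX | hpF
    · obtain ⟨hpX, hpfB⟩ := mem_sdiff.1 hpX
      exact mem_erase.2 ⟨fun h => hpfB (h ▸ mem_insert_self f B), mem_union_left Y hpX⟩
    · exact mem_erase.2 ⟨fun h => disjoint_left.1 hXY hf (h ▸ hFY hpF),
        mem_union_right X (hFY hpF)⟩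

end IsFlow

end Flows

theorem stmt15_general {V : Type*} [DecidableEq V] (A X₀ Y M : Finset (V × V))
    (s t : V) (ℓ : ℕ)
    (P : Fin ℓ → Finset (V × V))
    (hPdisj : ∀ i j, i ≠ j → Disjoint (P i) (P j))
    (hPpath : ∀ i, IsPathArcs s t (P i))
    (hX₀ : X₀ = Finset.univ.biUnion P)
    (hYA : Y ⊆ A \ X₀) :
    ftfFeasible (X₀ ∪ Y) M s t ℓ ↔
      ∀ f ∈ M ∩ X₀,
        Relation.ReflTransGen (fun x y => (x, y) ∈ Y ∨ (y, x) ∈ X₀) f.1 f.2 ∧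
        Relation.ReflTransGen (fun x y => (x, y) ∈ Y ∨ (y, x) ∈ X₀) f.2 f.1 := by
  have hX : IsFlow X₀ s t ℓ := hX₀ ▸ isFlow_biUnion hPdisj hPpath
  have hXY : Disjoint X₀ Y := Finset.disjoint_of_subset_right hYA Finset.disjoint_sdiff
  constructor
  · intro hfeas f hf
    obtain ⟨hfM, hfX⟩ := Finset.mem_inter.1 hf
    exact ⟨hX.reflTransGen_residualAdj_of_hasDisjointPaths hfX (hfeas f hfM),
      .single (Or.inr hfX)⟩
  · intro hres f hfM
    by_cases hfX : f ∈ X₀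
    · obtain ⟨Q, hQ, hQres⟩ :=
        exists_isPathArcs_of_reflTransGen (hres f (Finset.mem_inter.2 ⟨hfM, hfX⟩)).1
      exact hX.hasDisjointPaths_erase_of_isPathArcs hXY hfX hQ hQres
    · exact hX.hasDisjointPaths.mono fun p hp =>
        Finset.mem_erase.2 ⟨fun h => hfX (h ▸ hp), Finset.mem_union_left Y hp⟩

/-- Characterization of feasible augmentations via the residual graph: let `X₀` be the
union of `ℓ` pairwise arc-disjoint directed `s`-`t` paths and `Y ⊆ A \ X₀`. In the
residual graph `D_{X₀}(X₀ ∪ Y)` (arcs of `Y` forward, arcs of `X₀` reversed), the set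
`X₀ ∪ Y` is a feasible FTF solution iff every vulnerable arc `f ∈ M ∩ X₀` has both of
its endpoints in the same strongly connected component, i.e. its endpoints are
mutually reachable in the residual graph. -/
theorem stmt15 {V : Type*} [Fintype V] [DecidableEq V] (A X₀ Y M : Finset (V × V))
    (s t : V) (ℓ : ℕ) (hℓ : 1 ≤ ℓ)
    (P : Fin ℓ → Finset (V × V))
    (hPdisj : ∀ i j, i ≠ j → Disjoint (P i) (P j))
    (hPpath : ∀ i, IsPathArcs s t (P i))
    (hX₀ : X₀ = Finset.univ.biUnion P)
    (hX₀A : X₀ ⊆ A) (hYA : Y ⊆ A \ X₀) (hMA : M ⊆ A) :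
    ftfFeasible (X₀ ∪ Y) M s t ℓ ↔
      ∀ f ∈ M ∩ X₀,
        Relation.ReflTransGen (fun x y => (x, y) ∈ Y ∨ (y, x) ∈ X₀) f.1 f.2 ∧
        Relation.ReflTransGen (fun x y => (x, y) ∈ Y ∨ (y, x) ∈ X₀) f.2 f.1 :=
  stmt15_general A X₀ Y M s t ℓ P hPdisj hPpath hX₀ hYA
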